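/- Let f : X → Y and g : X' → Y' be chain maps in C_I(P) between minimal projective complexes such that f and g are isomorphic in the homotopy category K_I(P), i.e., there exist isomorphisms φ : X → X' and ψ : Y → Y' in K_I(P) with ψ∘[f] = [g]∘φ. Assume that f and g are irreducible in C_I(P). If f is sirreducible, then g is sirreducible. -/

import Mathlib

/-!
Over a finite-dimensional algebra, an endomorphism of a finitely generated module that differs
from the identity by a map into the radical is invertible (Nakayama). Homotopies between minimal
complexes take values in the radical, so a homotopy equivalence between minimal complexes is an
isomorphism in every degree, and the square `ψ ∘ [f] = [g] ∘ φ` relates each component of `f` to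
the corresponding component of `g` by isomorphisms, up to a map into the radical. Split
monomorphisms and split epimorphisms survive such perturbations, which transfers both the split
components of `f` and the failure of `f.f i₀` to split. Finally, a factorisation
`g.f i₀ = a ≫ b` through a finitely generated projective `Z` makes `g` factor through the minimal
complex equal to `X'` below `i₀`, to `Z` in degree `i₀` and to `Y'` above, and irreducibility of
`g` in `C_I(P)` then splits `a` or `b`.
-/

open CategoryTheory CategoryTheory.Limits

namespace ARShapes

variable {Λ : Type} [Ring Λ]

/-- Cochain complexes of (right) `Λ`-modules, i.e. `Λᵐᵒᵖ`-modules, indexed by `ℤ`. -/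
abbrev Cplx (Λ : Type) [Ring Λ] : Type 1 := CochainComplex (ModuleCat Λᵐᵒᵖ) ℤ

/-- A minimal projective complex: a complex of finitely generated projective right
`Λ`-modules whose differentials have image contained in the radical of the target. -/
def IsMinimalProjective (X : Cplx Λ) : Prop :=
  (∀ i : ℤ, Module.Finite Λᵐᵒᵖ (X.X i)) ∧ (∀ i : ℤ, Module.Projective Λᵐᵒᵖ (X.X i)) ∧
    (∀ i : ℤ, LinearMap.range (X.d i (i + 1)).hom ≤
      (Ideal.jacobson (⊥ : Ideal Λᵐᵒᵖ)) • (⊤ : Submodule Λᵐᵒᵖ (X.X (i + 1))))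

/-- Irreducibility of a morphism in the category `P` of finitely generated projective
right `Λ`-modules (a full subcategory of all modules). -/
def IrreducibleP {M N : ModuleCat Λᵐᵒᵖ} (φ : M ⟶ N) : Prop :=
  ¬ IsSplitMono φ ∧ ¬ IsSplitEpi φ ∧
    ∀ (Z : ModuleCat Λᵐᵒᵖ), Module.Finite Λᵐᵒᵖ Z → Module.Projective Λᵐᵒᵖ Z →
      ∀ (g : M ⟶ Z) (h : Z ⟶ N), φ = g ≫ h → IsSplitMono g ∨ IsSplitEpi h

/-- A chain map is smonic if all of its components are split monomorphisms. -/
def Smonic {X Y : Cplx Λ} (f : X ⟶ Y) : Prop := ∀ i : ℤ, IsSplitMono (f.f i)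

/-- A chain map is sepic if all of its components are split epimorphisms. -/
def Sepic {X Y : Cplx Λ} (f : X ⟶ Y) : Prop := ∀ i : ℤ, IsSplitEpi (f.f i)

/-- A chain map is sirreducible if there is exactly one index `i₀` where the component is
irreducible in the category of finitely generated projective modules, the components in lower
degrees being split epimorphisms and those in higher degrees split monomorphisms.  (Since an
irreducible morphism is neither a split monomorphism nor a split epimorphism, the uniqueness
of such an index is automatic.) -/
def Sirreducible {X Y : Cplx Λ} (f : X ⟶ Y) : Prop :=
  ∃ i₀ : ℤ, IrreducibleP (f.f i₀) ∧ (∀ i : ℤ, i < i₀ → IsSplitEpi (f.f i)) ∧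
    (∀ i : ℤ, i₀ < i → IsSplitMono (f.f i))

/-- Irreducibility of a chain map in the category `C_I(P)` of minimal projective
complexes (a full subcategory of all complexes). -/
def IrreducibleC {X Y : Cplx Λ} (f : X ⟶ Y) : Prop :=
  ¬ IsSplitMono f ∧ ¬ IsSplitEpi f ∧
    ∀ (Z : Cplx Λ), IsMinimalProjective Z →
      ∀ (g : X ⟶ Z) (h : Z ⟶ Y), f = g ≫ h → IsSplitMono g ∨ IsSplitEpi h

/-- The quotient functor from minimal projective complexes to the homotopy category
`K_I(P)` (realized inside the homotopy category of all complexes, of which `K_I(P)` is a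
full subcategory, so that isomorphisms between minimal projective complexes in `K_I(P)`
are the same as in the ambient homotopy category). -/
noncomputable abbrev Q (Λ : Type) [Ring Λ] :
    Cplx Λ ⥤ HomotopyCategory (ModuleCat Λᵐᵒᵖ) (ComplexShape.up ℤ) :=
  HomotopyCategory.quotient (ModuleCat Λᵐᵒᵖ) (ComplexShape.up ℤ)

end ARShapes

namespace Submodule

variable {R M : Type*} [Ring R] [AddCommGroup M] [Module R M]

theorem eq_top_of_sup_jacobson_smul_top_eq_top [IsCoatomic (Submodule R M)] {N : Submodule R M}
    (h : N ⊔ Ideal.jacobson (⊥ : Ideal R) • (⊤ : Submodule R M) = ⊤) : N = ⊤ := by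
  refine (eq_top_or_exists_le_coatom N).resolve_right ?_
  rintro ⟨m, hm, hNm⟩
  refine hm.1 (top_le_iff.1 (h ▸ sup_le hNm ?_))
  rw [Ideal.jacobson_bot]
  exact (Ring.jacobson_smul_top_le R M).trans (sInf_le hm)

end Submodule

namespace LinearMap

variable {R M N P : Type*} [Ring R] [AddCommGroup M] [Module R M] [AddCommGroup N] [Module R N]
  [AddCommGroup P] [Module R P]

def IsRadical (f : M →ₗ[R] N) : Prop :=
  range f ≤ Ideal.jacobson (⊥ : Ideal R) • (⊤ : Submodule R N)

theorem IsRadical.postcomp {f : M →ₗ[R] N} (hf : f.IsRadical) (g : N →ₗ[R] P) :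
    (g ∘ₗ f).IsRadical := by
  rw [IsRadical, range_comp]
  refine (Submodule.map_mono hf).trans ?_
  rw [Submodule.map_smul'']
  exact Submodule.smul_mono le_rfl le_top

theorem IsRadical.precomp {g : N →ₗ[R] P} (hg : g.IsRadical) (f : M →ₗ[R] N) :
    (g ∘ₗ f).IsRadical :=
  (range_comp_le_range f g).trans hg

theorem IsRadical.add {f g : M →ₗ[R] N} (hf : f.IsRadical) (hg : g.IsRadical) :
    (f + g).IsRadical :=
  (range_add_le f g).trans (sup_le hf hg)

theorem IsRadical.neg {f : M →ₗ[R] N} (hf : f.IsRadical) : (-f).IsRadical := by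
  rwa [IsRadical, range_neg]

theorem isRadical_zero : (0 : M →ₗ[R] N).IsRadical := by
  simp [IsRadical]

theorem bijective_of_isRadical_sub_id [OrzechProperty R] [Module.Finite R M] {f : M →ₗ[R] M}
    (hf : (f - LinearMap.id).IsRadical) : Function.Bijective f := by
  have hsurj : Function.Surjective f := by
    rw [← range_eq_top]
    refine Submodule.eq_top_of_sup_jacobson_smul_top_eq_top (eq_top_iff.2 fun x _ => ?_)
    have hx : x = f x - (f - LinearMap.id : M →ₗ[R] M) x := by simp
    rw [hx]
    exact Submodule.sub_mem _ (Submodule.mem_sup_left (mem_range_self f x))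
      (Submodule.mem_sup_right (hf (mem_range_self _ x)))
  exact ⟨OrzechProperty.injective_of_surjective_endomorphism f hsurj, hsurj⟩

end LinearMap

namespace CategoryTheory

variable {C : Type*} [Category C] {X Y Z : C}

theorem IsSplitMono.of_comp {f : X ⟶ Y} {g : Y ⟶ Z} (_ : IsSplitMono (f ≫ g)) :
    IsSplitMono f :=
  IsSplitMono.mk' ⟨g ≫ retraction (f ≫ g), by rw [← Category.assoc, IsSplitMono.id]⟩

theorem IsSplitEpi.of_comp {f : X ⟶ Y} {g : Y ⟶ Z} (_ : IsSplitEpi (f ≫ g)) : IsSplitEpi g :=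
  IsSplitEpi.mk' ⟨section_ (f ≫ g) ≫ f, by rw [Category.assoc, IsSplitEpi.id]⟩

theorem isSplitMono_iso_comp_iff (u : X ⟶ Y) [IsIso u] (q : Y ⟶ Z) :
    IsSplitMono (u ≫ q) ↔ IsSplitMono q :=
  ⟨fun _ => by simpa using (inferInstance : IsSplitMono (inv u ≫ u ≫ q)), fun _ => inferInstance⟩

theorem isSplitMono_comp_iso_iff (p : X ⟶ Y) (v : Y ⟶ Z) [IsIso v] :
    IsSplitMono (p ≫ v) ↔ IsSplitMono p :=
  ⟨IsSplitMono.of_comp, fun _ => inferInstance⟩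

theorem isSplitEpi_iso_comp_iff (u : X ⟶ Y) [IsIso u] (q : Y ⟶ Z) :
    IsSplitEpi (u ≫ q) ↔ IsSplitEpi q :=
  ⟨IsSplitEpi.of_comp, fun _ => inferInstance⟩

theorem isSplitEpi_comp_iso_iff (p : X ⟶ Y) (v : Y ⟶ Z) [IsIso v] :
    IsSplitEpi (p ≫ v) ↔ IsSplitEpi p :=
  ⟨fun _ => by simpa using (inferInstance : IsSplitEpi ((p ≫ v) ≫ inv v)), fun _ => inferInstance⟩

end CategoryTheory

namespace ModuleCat

variable {R : Type*} [Ring R] [OrzechProperty R] {M N M' N' : ModuleCat R}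

theorem isIso_of_isRadical_sub_id [Module.Finite R M] (e : M ⟶ M) (h : (e - 𝟙 M).hom.IsRadical) :
    IsIso e :=
  (ConcreteCategory.isIso_iff_bijective e).2 (LinearMap.bijective_of_isRadical_sub_id h)

theorem isSplitMono_of_isRadical_sub [Module.Finite R M] {p q : M ⟶ N} [IsSplitMono p]
    (h : (q - p).hom.IsRadical) : IsSplitMono q := by
  have : IsIso (q ≫ retraction p) := isIso_of_isRadical_sub_id _ <| by
    rw [show q ≫ retraction p - 𝟙 M = (q - p) ≫ retraction p by simp [Preadditive.sub_comp]]
    exact h.postcomp _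
  exact IsSplitMono.mk' ⟨retraction p ≫ inv (q ≫ retraction p), by
    rw [← Category.assoc, IsIso.hom_inv_id]⟩

theorem isSplitEpi_of_isRadical_sub [Module.Finite R N] {p q : M ⟶ N} [IsSplitEpi p]
    (h : (q - p).hom.IsRadical) : IsSplitEpi q := by
  have : IsIso (section_ p ≫ q) := isIso_of_isRadical_sub_id _ <| by
    rw [show section_ p ≫ q - 𝟙 N = section_ p ≫ (q - p) by simp [Preadditive.comp_sub]]
    exact h.precomp _
  exact IsSplitEpi.mk' ⟨inv (section_ p ≫ q) ≫ section_ p, by simp⟩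

theorem isSplitMono_iff_of_isRadical_sub [Module.Finite R M] {p q : M ⟶ N}
    (h : (p - q).hom.IsRadical) : IsSplitMono p ↔ IsSplitMono q :=
  ⟨fun _ => isSplitMono_of_isRadical_sub (by simpa using h.neg),
    fun _ => isSplitMono_of_isRadical_sub h⟩

theorem isSplitEpi_iff_of_isRadical_sub [Module.Finite R N] {p q : M ⟶ N}
    (h : (p - q).hom.IsRadical) : IsSplitEpi p ↔ IsSplitEpi q :=
  ⟨fun _ => isSplitEpi_of_isRadical_sub (by simpa using h.neg),
    fun _ => isSplitEpi_of_isRadical_sub h⟩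

variable {p : M ⟶ N} {q : M' ⟶ N'} {u : M ⟶ M'} {v : N ⟶ N'} [IsIso u] [IsIso v]

theorem isSplitMono_iff_of_isRadical_comp_sub_comp [Module.Finite R M]
    (h : (p ≫ v - u ≫ q).hom.IsRadical) : IsSplitMono p ↔ IsSplitMono q := by
  rw [← isSplitMono_comp_iso_iff p v, isSplitMono_iff_of_isRadical_sub h,
    isSplitMono_iso_comp_iff]

theorem isSplitEpi_iff_of_isRadical_comp_sub_comp [Module.Finite R N']
    (h : (p ≫ v - u ≫ q).hom.IsRadical) : IsSplitEpi p ↔ IsSplitEpi q := by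
  rw [← isSplitEpi_comp_iso_iff p v, isSplitEpi_iff_of_isRadical_sub h, isSplitEpi_iso_comp_iff]

end ModuleCat

section RadicalDifferentials

variable {R : Type*} [Ring R] {ι : Type*} {c : ComplexShape ι}
  {X Y : HomologicalComplex (ModuleCat R) c}

theorem Homotopy.isRadical_sub (hX : ∀ i j, (X.d i j).hom.IsRadical)
    (hY : ∀ i j, (Y.d i j).hom.IsRadical) {p q : X ⟶ Y} (H : Homotopy p q) (i : ι) :
    (p.f i - q.f i).hom.IsRadical := by
  rw [H.comm i, add_sub_cancel_right]
  exact ((hX _ _).postcomp _).add ((hY _ _).precomp _)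

theorem HomotopyCategory.isIso_f_of_isIso_quotient_map [OrzechProperty R]
    (hX : ∀ i j, (X.d i j).hom.IsRadical) (hY : ∀ i j, (Y.d i j).hom.IsRadical)
    [∀ i, Module.Finite R (X.X i)] [∀ i, Module.Finite R (Y.X i)]
    (w : X ⟶ Y) [IsIso ((quotient (ModuleCat R) c).map w)] (i : ι) : IsIso (w.f i) := by
  obtain ⟨w', hw'⟩ := (quotient (ModuleCat R) c).map_surjective (inv ((quotient _ c).map w))
  have H : Homotopy (w ≫ w') (𝟙 X) := homotopyOfEq _ _ (by simp [hw'])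
  have H' : Homotopy (w' ≫ w) (𝟙 Y) := homotopyOfEq _ _ (by simp [hw'])
  have : IsIso (w.f i ≫ w'.f i) := ModuleCat.isIso_of_isRadical_sub_id _ (H.isRadical_sub hX hX i)
  have : IsIso (w'.f i ≫ w.f i) :=
    ModuleCat.isIso_of_isRadical_sub_id _ (H'.isRadical_sub hY hY i)
  have := mono_of_mono (w.f i) (w'.f i)
  have := IsSplitEpi.of_comp (inferInstance : IsSplitEpi (w'.f i ≫ w.f i))
  exact isIso_of_mono_of_isSplitEpi _

end RadicalDifferentials

namespace CochainComplex

variable {C : Type*} [Category C] [HasZeroMorphisms C]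

def spliceX (X Y : CochainComplex C ℤ) (i₀ : ℤ) (Z : C) (i : ℤ) : C :=
  if i < i₀ then X.X i else if i = i₀ then Z else Y.X i

variable {X Y : CochainComplex C ℤ} {i₀ i : ℤ} {Z : C}

theorem spliceX_cases {P : C → Prop} (hX : ∀ i, P (X.X i)) (hZ : P Z) (hY : ∀ i, P (Y.X i))
    (i : ℤ) : P (spliceX X Y i₀ Z i) := by
  rw [spliceX]
  split_ifs
  exacts [hX i, hZ, hY i]

theorem spliceX_of_lt (h : i < i₀) : spliceX X Y i₀ Z i = X.X i := if_pos h

theorem spliceX_self : spliceX X Y i₀ Z i₀ = Z := by simp [spliceX]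

theorem spliceX_of_gt (h : i₀ < i) : spliceX X Y i₀ Z i = Y.X i := by
  simp [spliceX, h.not_gt, h.ne']

def toSpliceF (g : X ⟶ Y) (i₀ : ℤ) (a : X.X i₀ ⟶ Z) (i : ℤ) : X.X i ⟶ spliceX X Y i₀ Z i :=
  if h : i < i₀ then eqToHom (spliceX_of_lt h).symm
  else if h' : i = i₀ then eqToHom (by rw [h']) ≫ a ≫ eqToHom (by rw [h', spliceX_self])
  else g.f i ≫ eqToHom (spliceX_of_gt (by omega)).symm

def fromSpliceF (g : X ⟶ Y) (i₀ : ℤ) (b : Z ⟶ Y.X i₀) (i : ℤ) : spliceX X Y i₀ Z i ⟶ Y.X i :=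
  if h : i < i₀ then eqToHom (spliceX_of_lt h) ≫ g.f i
  else if h' : i = i₀ then eqToHom (by rw [h', spliceX_self]) ≫ b ≫ eqToHom (by rw [h'])
  else eqToHom (spliceX_of_gt (by omega))

variable {g : X ⟶ Y} {a : X.X i₀ ⟶ Z} {b : Z ⟶ Y.X i₀}

theorem toSpliceF_of_lt (h : i < i₀) :
    toSpliceF g i₀ a i = eqToHom (spliceX_of_lt h).symm := dif_pos h

theorem toSpliceF_self : toSpliceF g i₀ a i₀ = a ≫ eqToHom spliceX_self.symm := by
  simp [toSpliceF]

theorem toSpliceF_of_gt (h : i₀ < i) :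
    toSpliceF g i₀ a i = g.f i ≫ eqToHom (spliceX_of_gt h).symm := by
  rw [toSpliceF, dif_neg h.not_gt, dif_neg h.ne']

theorem fromSpliceF_of_lt (h : i < i₀) :
    fromSpliceF g i₀ b i = eqToHom (spliceX_of_lt h) ≫ g.f i := dif_pos h

theorem fromSpliceF_self : fromSpliceF g i₀ b i₀ = eqToHom spliceX_self ≫ b := by
  simp [fromSpliceF]

theorem fromSpliceF_of_gt (h : i₀ < i) :
    fromSpliceF g i₀ b i = eqToHom (spliceX_of_gt h) := by
  rw [fromSpliceF, dif_neg h.not_gt, dif_neg h.ne']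

theorem toSpliceF_comp_fromSpliceF (hab : g.f i₀ = a ≫ b) (i : ℤ) :
    toSpliceF g i₀ a i ≫ fromSpliceF g i₀ b i = g.f i := by
  rcases lt_trichotomy i i₀ with h | rfl | h
  · simp [toSpliceF_of_lt h, fromSpliceF_of_lt h]
  · simp [toSpliceF_self, fromSpliceF_self, hab]
  · simp [toSpliceF_of_gt h, fromSpliceF_of_gt h]

theorem toSpliceF_comp_fromSpliceF_assoc (hab : g.f i₀ = a ≫ b) (i : ℤ) {W : C}
    (h : Y.X i ⟶ W) : toSpliceF g i₀ a i ≫ fromSpliceF g i₀ b i ≫ h = g.f i ≫ h := by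
  rw [← Category.assoc, toSpliceF_comp_fromSpliceF hab]

variable (g a b) in
def spliceD (i : ℤ) : spliceX X Y i₀ Z i ⟶ spliceX X Y i₀ Z (i + 1) :=
  if h : i < i₀ then eqToHom (spliceX_of_lt h) ≫ X.d i (i + 1) ≫ toSpliceF g i₀ a (i + 1)
  else fromSpliceF g i₀ b i ≫ Y.d i (i + 1) ≫ eqToHom (spliceX_of_gt (by omega)).symm

theorem spliceD_of_lt (h : i < i₀) :
    spliceD g a b i = eqToHom (spliceX_of_lt h) ≫ X.d i (i + 1) ≫ toSpliceF g i₀ a (i + 1) :=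
  dif_pos h

theorem spliceD_of_ge (h : i₀ ≤ i) :
    spliceD g a b i =
      fromSpliceF g i₀ b i ≫ Y.d i (i + 1) ≫ eqToHom (spliceX_of_gt (by omega)).symm :=
  dif_neg h.not_gt

theorem spliceD_comp_spliceD (hab : g.f i₀ = a ≫ b) (i : ℤ) :
    spliceD g a b i ≫ spliceD g a b (i + 1) = 0 := by
  by_cases h : i + 1 < i₀
  · simp [spliceD_of_lt h, spliceD_of_lt (show i < i₀ by omega),
      toSpliceF_of_lt h]
  by_cases h' : i < i₀
  · rw [spliceD_of_lt h', spliceD_of_ge (not_lt.1 h)]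
    simp only [Category.assoc, toSpliceF_comp_fromSpliceF_assoc hab, g.comm_assoc,
      HomologicalComplex.d_comp_d_assoc, zero_comp, comp_zero]
  · simp [spliceD_of_ge (not_lt.1 h'), spliceD_of_ge (not_lt.1 h),
      fromSpliceF_of_gt (show i₀ < i + 1 by omega)]

def splice (hab : g.f i₀ = a ≫ b) : CochainComplex C ℤ :=
  of (spliceX X Y i₀ Z) (spliceD g a b) (spliceD_comp_spliceD hab)

theorem splice_d (hab : g.f i₀ = a ≫ b) (i : ℤ) : (splice hab).d i (i + 1) = spliceD g a b i :=
  of_d _ _ i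

def toSplice (hab : g.f i₀ = a ≫ b) : X ⟶ splice hab where
  f := toSpliceF g i₀ a
  comm' := by
    rintro i _ rfl
    simp only [splice, of_d]
    by_cases h : i < i₀
    · simp [spliceD_of_lt h, toSpliceF_of_lt h]
    · rw [spliceD_of_ge (not_lt.1 h), toSpliceF_comp_fromSpliceF_assoc hab, g.comm_assoc,
        toSpliceF_of_gt (show i₀ < i + 1 by omega)]

def fromSplice (hab : g.f i₀ = a ≫ b) : splice hab ⟶ Y where
  f := fromSpliceF g i₀ b
  comm' := by
    rintro i _ rfl
    simp only [splice, of_d]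
    by_cases h : i < i₀
    · simp [spliceD_of_lt h, fromSpliceF_of_lt h, toSpliceF_comp_fromSpliceF hab]
    · simp [spliceD_of_ge (not_lt.1 h), fromSpliceF_of_gt (show i₀ < i + 1 by omega)]

theorem toSplice_comp_fromSplice (hab : g.f i₀ = a ≫ b) : toSplice hab ≫ fromSplice hab = g := by
  ext i
  exact toSpliceF_comp_fromSpliceF hab i

end CochainComplex

theorem isNoetherianRing_mulOpposite_of_finite (k Λ : Type*) [CommRing k] [IsNoetherianRing k]
    [Ring Λ] [Algebra k Λ] [Module.Finite k Λ] : IsNoetherianRing Λᵐᵒᵖ :=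
  have : Module.Finite k Λᵐᵒᵖ := Module.Finite.equiv (MulOpposite.opLinearEquiv k)
  isNoetherian_of_tower k (isNoetherian_of_isNoetherianRing_of_finite k Λᵐᵒᵖ)

namespace ARShapes

open CochainComplex

variable {Λ : Type} [Ring Λ] {X Y X' Y' : Cplx Λ}

theorem IsMinimalProjective.isRadical_d (hX : IsMinimalProjective X) (i j : ℤ) :
    (X.d i j).hom.IsRadical := by
  by_cases h : i + 1 = j
  · subst h
    exact hX.2.2 i
  · rw [X.shape i j h]
    exact LinearMap.isRadical_zero

theorem IsMinimalProjective.isIso_f_of_map_eq [OrzechProperty Λᵐᵒᵖ]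
    (hX : IsMinimalProjective X) (hX' : IsMinimalProjective X') {w : X ⟶ X'}
    {φ : (Q Λ).obj X ≅ (Q Λ).obj X'} (hw : (Q Λ).map w = φ.hom) (i : ℤ) : IsIso (w.f i) :=
  have := hX.1
  have := hX'.1
  have : IsIso ((Q Λ).map w) := hw ▸ inferInstance
  HomotopyCategory.isIso_f_of_isIso_quotient_map hX.isRadical_d hX'.isRadical_d w i

theorem IsMinimalProjective.splice (hX : IsMinimalProjective X) (hY : IsMinimalProjective Y)
    {i₀ : ℤ} {Z : ModuleCat Λᵐᵒᵖ} [Module.Finite Λᵐᵒᵖ Z] [Module.Projective Λᵐᵒᵖ Z]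
    {g : X ⟶ Y} {a : X.X i₀ ⟶ Z} {b : Z ⟶ Y.X i₀} (hab : g.f i₀ = a ≫ b) :
    IsMinimalProjective (splice hab) := by
  refine ⟨spliceX_cases (P := fun M : ModuleCat Λᵐᵒᵖ => Module.Finite Λᵐᵒᵖ M) hX.1 ‹_› hY.1,
    spliceX_cases (P := fun M : ModuleCat Λᵐᵒᵖ => Module.Projective Λᵐᵒᵖ M) hX.2.1 ‹_› hY.2.1,
    fun i => ?_⟩
  rw [splice_d]
  by_cases h : i < i₀
  · rw [spliceD_of_lt h]
    exact ((hX.isRadical_d i (i + 1)).postcomp _).precomp _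
  · rw [spliceD_of_ge (not_lt.1 h)]
    exact ((hY.isRadical_d i (i + 1)).postcomp _).precomp _

theorem IrreducibleC.isSplitMono_or_isSplitEpi_of_f_eq_comp {g : X ⟶ Y} (hg : IrreducibleC g)
    (hX : IsMinimalProjective X) (hY : IsMinimalProjective Y) {i₀ : ℤ} {Z : ModuleCat Λᵐᵒᵖ}
    [Module.Finite Λᵐᵒᵖ Z] [Module.Projective Λᵐᵒᵖ Z] {a : X.X i₀ ⟶ Z} {b : Z ⟶ Y.X i₀}
    (hab : g.f i₀ = a ≫ b) : IsSplitMono a ∨ IsSplitEpi b := by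
  rcases hg.2.2 _ (hX.splice hY hab) _ _ (toSplice_comp_fromSplice hab).symm with h | h
  · left
    have : IsSplitMono ((HomologicalComplex.eval _ _ i₀).map (toSplice hab)) := inferInstance
    simp only [HomologicalComplex.eval_map, toSplice, toSpliceF_self] at this
    exact this.of_comp
  · right
    have : IsSplitEpi ((HomologicalComplex.eval _ _ i₀).map (fromSplice hab)) := inferInstance
    simp only [HomologicalComplex.eval_map, fromSplice, fromSpliceF_self] at this
    exact this.of_comp

theorem isSplitMono_f_iff_and_isSplitEpi_f_iff_of_comm [OrzechProperty Λᵐᵒᵖ]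
    (hX : IsMinimalProjective X) (hY : IsMinimalProjective Y)
    (hX' : IsMinimalProjective X') (hY' : IsMinimalProjective Y') {f : X ⟶ Y} {g : X' ⟶ Y'}
    {φ : (Q Λ).obj X ≅ (Q Λ).obj X'} {ψ : (Q Λ).obj Y ≅ (Q Λ).obj Y'}
    (hcomm : (Q Λ).map f ≫ ψ.hom = φ.hom ≫ (Q Λ).map g) (i : ℤ) :
    (IsSplitMono (f.f i) ↔ IsSplitMono (g.f i)) ∧ (IsSplitEpi (f.f i) ↔ IsSplitEpi (g.f i)) := by
  obtain ⟨w, hw⟩ := (Q Λ).map_surjective φ.hom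
  obtain ⟨z, hz⟩ := (Q Λ).map_surjective ψ.hom
  have H : Homotopy (f ≫ z) (w ≫ g) := HomotopyCategory.homotopyOfEq _ _ (by simp [hw, hz, hcomm])
  have hrad := H.isRadical_sub hX.isRadical_d hY'.isRadical_d i
  have := hX.isIso_f_of_map_eq hX' hw i
  have := hY.isIso_f_of_map_eq hY' hz i
  have := hX.1 i
  have := hY'.1 i
  exact ⟨ModuleCat.isSplitMono_iff_of_isRadical_comp_sub_comp hrad,
    ModuleCat.isSplitEpi_iff_of_isRadical_comp_sub_comp hrad⟩

theorem sirreducible_of_iso_general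
    {k Λ : Type} [Field k] [Ring Λ] [Algebra k Λ] [FiniteDimensional k Λ]
    (X Y X' Y' : Cplx Λ)
    (hX : IsMinimalProjective X) (hY : IsMinimalProjective Y)
    (hX' : IsMinimalProjective X') (hY' : IsMinimalProjective Y')
    (f : X ⟶ Y) (g : X' ⟶ Y')
    (φ : (Q Λ).obj X ≅ (Q Λ).obj X') (ψ : (Q Λ).obj Y ≅ (Q Λ).obj Y')
    (hcomm : (Q Λ).map f ≫ ψ.hom = φ.hom ≫ (Q Λ).map g)
    (hgirr : IrreducibleC g)
    (hf : Sirreducible f) :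
    Sirreducible g := by
  have := isNoetherianRing_mulOpposite_of_finite k Λ
  have hsplit := isSplitMono_f_iff_and_isSplitEpi_f_iff_of_comm hX hY hX' hY' hcomm
  obtain ⟨i₀, ⟨hnmono, hnepi, -⟩, hlow, hhigh⟩ := hf
  refine ⟨i₀, ⟨(hsplit i₀).1.not.1 hnmono, (hsplit i₀).2.not.1 hnepi, ?_⟩,
    fun i hi => (hsplit i).2.1 (hlow i hi), fun i hi => (hsplit i).1.1 (hhigh i hi)⟩
  intro Z _ _ a b hab
  exact hgirr.isSplitMono_or_isSplitEpi_of_f_eq_comp hX' hY' hab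

/-- If irreducible chain maps `f` and `g` between minimal projective complexes are isomorphic in the homotopy category `K_I(P)` and `f` is sirreducible, then `g` is sirreducible. -/
theorem sirreducible_of_iso
    {k Λ : Type} [Field k] [Ring Λ] [Algebra k Λ] [FiniteDimensional k Λ]
    (X Y X' Y' : Cplx Λ)
    (hX : IsMinimalProjective X) (hY : IsMinimalProjective Y)
    (hX' : IsMinimalProjective X') (hY' : IsMinimalProjective Y')
    (f : X ⟶ Y) (g : X' ⟶ Y')
    (φ : (Q Λ).obj X ≅ (Q Λ).obj X') (ψ : (Q Λ).obj Y ≅ (Q Λ).obj Y')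
    (hcomm : (Q Λ).map f ≫ ψ.hom = φ.hom ≫ (Q Λ).map g)
    (hfirr : IrreducibleC f) (hgirr : IrreducibleC g)
    (hf : Sirreducible f) :
    Sirreducible g :=
  sirreducible_of_iso_general (k := k) X Y X' Y' hX hY hX' hY' f g φ ψ hcomm hgirr hf

end ARShapes
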